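/- As α → 0⁺, the MDYPL estimator β̂(α) (the unique maximizer of ℓ(β; y*, X) with y*_j = α y_j + (1−α)/2) converges to 0, the prior mode; and if the ML estimate β̂^{ML} exists (is finite), then β̂(α) → β̂^{ML} as α → 1⁻. -/

import Mathlib

/-!
The MDYPL objective splits as `α ℓ_y + (1 - α) ℓ_{1/2}`, where `ℓ_{1/2}` is maximised at `0` and
has compact superlevel sets, and `ℓ_y ≤ 0` for binary `y`. Comparing the objective at `β̂(α)` with
its value at `0` (resp. at `β̂^{ML}`) squeezes the dominant part, `ℓ_{1/2}` as `α → 0` (resp. `ℓ_y`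
as `α → 1`), to its maximum, and keeps `β̂(α)` in a fixed superlevel set of `ℓ_{1/2}`. Since `ζ` is
strictly convex and `X` is injective, both log-likelihoods are strictly concave, so their maximisers
are unique; on a compact set, points whose values tend to the maximum of a continuous function with
a unique maximiser must converge to it.
-/

noncomputable def zeta (x : ℝ) : ℝ := Real.log (1 + Real.exp x)

noncomputable def loglik {n p : ℕ} (y : Fin n → ℝ) (X : Fin n → Fin p → ℝ)
    (β : Fin p → ℝ) : ℝ :=
  ∑ j, (y j * (∑ i, X j i * β i) - zeta (∑ i, X j i * β i))

open Filter Set Topology Matrix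

section Zeta

open Real

lemma continuous_zeta : Continuous zeta :=
  (continuous_const.add continuous_exp).log fun x => (by positivity : 1 + exp x ≠ 0)

lemma hasDerivAt_zeta (x : ℝ) : HasDerivAt zeta (sigmoid x) x := by
  have h := ((hasDerivAt_exp x).const_add 1).log (by positivity)
  rwa [show exp x / (1 + exp x) = sigmoid x by rw [sigmoid_def, exp_neg]; field_simp; ring] at h

lemma strictConvexOn_zeta : StrictConvexOn ℝ univ zeta := by
  refine StrictMono.strictConvexOn_univ_of_deriv continuous_zeta ?_
  rw [show deriv zeta = sigmoid from funext fun x => (hasDerivAt_zeta x).deriv]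
  exact sigmoid_strictMono

lemma zeta_neg (x : ℝ) : zeta (-x) = zeta x - x := by
  rw [zeta, zeta, eq_sub_iff_add_eq, ← log_exp x, ← log_mul (by positivity) (by positivity),
    log_exp, add_mul, one_mul, ← exp_add, neg_add_cancel, exp_zero, add_comm]

lemma zeta_pos (x : ℝ) : 0 < zeta x :=
  log_pos (lt_add_of_pos_right 1 (exp_pos x))

lemma le_zeta (x : ℝ) : x ≤ zeta x := by
  linarith [zeta_neg x, zeta_pos (-x)]

lemma zeta_zero_add_half_le (x : ℝ) : zeta 0 + x / 2 ≤ zeta x := by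
  have := strictConvexOn_zeta.convexOn.2 (mem_univ x) (mem_univ (-x))
    (by norm_num : (0 : ℝ) ≤ 1 / 2) (by norm_num : (0 : ℝ) ≤ 1 / 2) (by norm_num)
  simp only [smul_eq_mul, zeta_neg] at this
  ring_nf at this ⊢
  linarith

lemma half_add_abs_half_le_zeta (x : ℝ) : x / 2 + |x| / 2 ≤ zeta x := by
  rcases abs_cases x with ⟨h, _⟩ | ⟨h, _⟩ <;> rw [h] <;> linarith [le_zeta x, zeta_pos x]

end Zeta

section Loglik

variable {n p : ℕ} (X : Matrix (Fin n) (Fin p) ℝ)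

lemma loglik_eq_sum_mulVec (y : Fin n → ℝ) (β : Fin p → ℝ) :
    loglik y X β = ∑ j, (y j * (X *ᵥ β) j - zeta ((X *ᵥ β) j)) := rfl

lemma continuous_loglik (y : Fin n → ℝ) : Continuous (loglik y X) := by
  have hX : Continuous (X *ᵥ ·) := (mulVecLin X).continuous_of_finiteDimensional
  refine continuous_finsetSum _ fun j _ => ?_
  have hj : Continuous fun β => (X *ᵥ β) j := (continuous_apply j).comp hX
  exact (continuous_const.mul hj).sub (continuous_zeta.comp hj)

lemma loglik_shrink_eq_add (y : Fin n → ℝ) (α : ℝ) :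
    loglik (fun j => α * y j + (1 - α) / 2) X =
      fun β => α * loglik y X β + (1 - α) * loglik (fun _ => 1 / 2) X β := by
  ext β
  simp only [loglik_eq_sum_mulVec, Finset.mul_sum, ← Finset.sum_add_distrib]
  exact Finset.sum_congr rfl fun j _ => by ring

lemma strictConcaveOn_loglik (y : Fin n → ℝ) (hX : Function.Injective (X *ᵥ ·)) :
    StrictConcaveOn ℝ univ (loglik y X) := by
  refine ⟨convex_univ, fun β _ β' _ hne a b ha hb hab => ?_⟩
  obtain ⟨j₀, hj₀⟩ := Function.ne_iff.mp (hX.ne hne)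
  have hlin (j : Fin n) : (X *ᵥ (a • β + b • β')) j = a * (X *ᵥ β) j + b * (X *ᵥ β') j := by
    simp [mulVec_add, mulVec_smul]
  simp only [loglik_eq_sum_mulVec, smul_eq_mul, Finset.mul_sum, ← Finset.sum_add_distrib, hlin]
  refine Finset.sum_lt_sum (fun j _ => ?_) ⟨j₀, Finset.mem_univ _, ?_⟩
  · linear_combination strictConvexOn_zeta.convexOn.2 (mem_univ ((X *ᵥ β) j))
      (mem_univ ((X *ᵥ β') j)) ha.le hb.le hab
  · linear_combination strictConvexOn_zeta.2 (mem_univ ((X *ᵥ β) j₀))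
      (mem_univ ((X *ᵥ β') j₀)) hj₀ ha hb hab

lemma loglik_nonpos {y : Fin n → ℝ} (hy : ∀ j, y j = 0 ∨ y j = 1) (β : Fin p → ℝ) :
    loglik y X β ≤ 0 := by
  rw [loglik_eq_sum_mulVec]
  refine Finset.sum_nonpos fun j _ => ?_
  rcases hy j with h | h <;> rw [h]
  · linarith [zeta_pos ((X *ᵥ β) j)]
  · linarith [le_zeta ((X *ᵥ β) j)]

lemma isMaxOn_loglik_half_zero : IsMaxOn (loglik (fun _ => 1 / 2) X) univ 0 := by
  intro β _
  rw [mem_ofPred_eq, loglik_eq_sum_mulVec, loglik_eq_sum_mulVec]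
  refine Finset.sum_le_sum fun j _ => ?_
  simp only [mulVec_zero, Pi.zero_apply, mul_zero, zero_sub]
  linarith [zeta_zero_add_half_le ((X *ᵥ β) j)]

lemma abs_mulVec_le_of_le_loglik_half {c : ℝ} {β : Fin p → ℝ}
    (hβ : c ≤ loglik (fun _ => 1 / 2) X β) (j : Fin n) : |(X *ᵥ β) j| ≤ -2 * c := by
  set t := X *ᵥ β
  have hterm (k : Fin n) : |t k| / 2 ≤ zeta (t k) - 1 / 2 * t k := by
    linarith [half_add_abs_half_le_zeta (t k)]
  have hsum : ∑ k, (zeta (t k) - 1 / 2 * t k) = -loglik (fun _ => 1 / 2) X β := by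
    rw [loglik_eq_sum_mulVec, ← Finset.sum_neg_distrib]
    exact Finset.sum_congr rfl fun k _ => by ring
  have hsingle : zeta (t j) - 1 / 2 * t j ≤ ∑ k, (zeta (t k) - 1 / 2 * t k) :=
    Finset.single_le_sum (f := fun k => zeta (t k) - 1 / 2 * t k)
      (fun k _ => (div_nonneg (abs_nonneg _) zero_le_two).trans (hterm k)) (Finset.mem_univ j)
  linarith [hterm j]

lemma isCompact_setOf_le_loglik_half (hX : Function.Injective (X *ᵥ ·)) (c : ℝ) :
    IsCompact {β | c ≤ loglik (fun _ => 1 / 2) X β} := by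
  have hK : IsCompact ((X *ᵥ ·) ⁻¹' univ.pi fun _ => Icc (2 * c) (-2 * c)) :=
    (LinearMap.isClosedEmbedding_of_injective (f := mulVecLin X) (LinearMap.ker_eq_bot.mpr hX))
      |>.isCompact_preimage (isCompact_univ_pi fun _ => isCompact_Icc)
  refine hK.of_isClosed_subset (isClosed_le continuous_const (continuous_loglik X _))
    fun β hβ j _ => ?_
  have := abs_le.mp (abs_mulVec_le_of_le_loglik_half X hβ j)
  exact ⟨by linarith [this.1], this.2⟩

end Loglik

lemma IsCompact.tendsto_of_tendsto_comp {E ι : Type*} [TopologicalSpace E] {K : Set E}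
    (hK : IsCompact K) {f : E → ℝ} (hf : Continuous f) {b : E} (hb : IsMaxOn f univ b)
    (huniq : ∀ x, IsMaxOn f univ x → x = b) {l : Filter ι} {g : ι → E}
    (hgK : ∀ᶠ i in l, g i ∈ K) (hfg : Tendsto (f ∘ g) l (𝓝 (f b))) :
    Tendsto g l (𝓝 b) := by
  refine hK.tendsto_nhds_of_unique_mapClusterPt hgK fun x _ hx => huniq x fun z hz => ?_
  -- `f x` is a cluster point of `f ∘ g`, which converges to `f b`
  have hfx : f x = f b :=
    eq_of_nhds_neBot ((hx.continuousAt_comp hf.continuousAt).clusterPt.mono hfg)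
  exact hfx ▸ hb hz

section Weighted

variable {E ι : Type*} {F G : E → ℝ} {b c : E} {w M : ℝ}

lemma le_of_isMaxOn_weighted (hc : IsMaxOn (fun x => w * F x + (1 - w) * G x) univ c)
    (hb : IsMaxOn G univ b) (hw : w ∈ Ioo 0 1) : F b ≤ F c := by
  have hcb : w * F b + (1 - w) * G b ≤ w * F c + (1 - w) * G c := hc (mem_univ b)
  have hbc : G c ≤ G b := hb (mem_univ c)
  have : w * F b ≤ w * F c := by nlinarith [hw.2]
  exact le_of_mul_le_mul_left this hw.1

lemma sub_le_of_isMaxOn_weighted (hc : IsMaxOn (fun x => w * F x + (1 - w) * G x) univ c)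
    (hF : ∀ x, F x ≤ M) (hw : w ∈ Ioo 0 1) (b : E) :
    G b - w / (1 - w) * (M - F b) ≤ G c := by
  have hcb : w * F b + (1 - w) * G b ≤ w * F c + (1 - w) * G c := hc (mem_univ b)
  have h1w : 0 < 1 - w := sub_pos.mpr hw.2
  rw [div_mul_eq_mul_div, sub_le_comm, le_div_iff₀ h1w]
  nlinarith [hF c, hw.1]

lemma tendsto_comp_of_isMaxOn_weighted {l : Filter ι} {w : ι → ℝ} {c : ι → E}
    (hw : Tendsto w l (𝓝 0)) (hw01 : ∀ᶠ i in l, w i ∈ Ioo 0 1)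
    (hc : ∀ᶠ i in l, IsMaxOn (fun x => w i * F x + (1 - w i) * G x) univ (c i))
    (hF : ∀ x, F x ≤ M) (hb : IsMaxOn G univ b) :
    Tendsto (G ∘ c) l (𝓝 (G b)) := by
  have hlower : Tendsto (fun i => G b - w i / (1 - w i) * (M - F b)) l (𝓝 (G b)) := by
    simpa using tendsto_const_nhds.sub
      ((hw.div (tendsto_const_nhds.sub hw) (by norm_num)).mul_const (M - F b))
  refine tendsto_of_tendsto_of_tendsto_of_le_of_le' hlower tendsto_const_nhds ?_
    (Eventually.of_forall fun i => hb (mem_univ (c i)))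
  filter_upwards [hc, hw01] with i hci hwi using sub_le_of_isMaxOn_weighted hci hF hwi b

end Weighted

section Mdypl

variable {n p : ℕ} {y : Fin n → ℝ} {X : Matrix (Fin n) (Fin p) ℝ} {bhat : ℝ → Fin p → ℝ}

lemma tendsto_mdypl_nhdsWithin_zero (hy : ∀ j, y j = 0 ∨ y j = 1)
    (hX : Function.Injective (X *ᵥ ·))
    (hbhat : ∀ α ∈ Ioo (0 : ℝ) 1,
      IsMaxOn (loglik (fun j => α * y j + (1 - α) / 2) X) univ (bhat α)) :
    Tendsto bhat (𝓝[Ioo 0 1] 0) (𝓝 0) := by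
  set ℓh := loglik (fun _ => (1 : ℝ) / 2) X
  have hval : Tendsto (ℓh ∘ bhat) (𝓝[Ioo 0 1] 0) (𝓝 (ℓh 0)) :=
    tendsto_comp_of_isMaxOn_weighted (w := fun α => α) (tendsto_id.mono_left nhdsWithin_le_nhds)
      self_mem_nhdsWithin
      (eventually_nhdsWithin_of_forall fun α hα => by
        simpa only [loglik_shrink_eq_add] using hbhat α hα)
      (loglik_nonpos X hy) (isMaxOn_loglik_half_zero X)
  exact (isCompact_setOf_le_loglik_half X hX (ℓh 0 - 1)).tendsto_of_tendsto_comp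
    (continuous_loglik X _) (isMaxOn_loglik_half_zero X)
    (fun x hx => (strictConcaveOn_loglik X _ hX).eq_of_isMaxOn hx (isMaxOn_loglik_half_zero X)
      trivial trivial)
    (hval.eventually (eventually_ge_nhds (by linarith))) hval

lemma tendsto_mdypl_nhdsWithin_one (hX : Function.Injective (X *ᵥ ·))
    (hbhat : ∀ α ∈ Ioo (0 : ℝ) 1,
      IsMaxOn (loglik (fun j => α * y j + (1 - α) / 2) X) univ (bhat α))
    {bML : Fin p → ℝ} (hbML : IsMaxOn (loglik y X) univ bML) :
    Tendsto bhat (𝓝[Ioo 0 1] 1) (𝓝 bML) := by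
  set ℓh := loglik (fun _ => (1 : ℝ) / 2) X
  have hw : Tendsto (fun α : ℝ => 1 - α) (𝓝[Ioo 0 1] 1) (𝓝 0) :=
    ((continuous_const.sub continuous_id).tendsto' 1 0 (sub_self 1)).mono_left
      nhdsWithin_le_nhds
  have hw01 : ∀ᶠ α in 𝓝[Ioo 0 1] (1 : ℝ), 1 - α ∈ Ioo 0 1 :=
    eventually_nhdsWithin_of_forall fun α hα => ⟨sub_pos.2 hα.2, sub_lt_self 1 hα.1⟩
  have hc : ∀ᶠ α in 𝓝[Ioo 0 1] (1 : ℝ),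
      IsMaxOn (fun β => (1 - α) * ℓh β + (1 - (1 - α)) * loglik y X β) univ (bhat α) :=
    eventually_nhdsWithin_of_forall fun α hα => by
      convert hbhat α hα using 1
      rw [loglik_shrink_eq_add]
      ext β
      ring
  exact (isCompact_setOf_le_loglik_half X hX (ℓh bML)).tendsto_of_tendsto_comp
    (continuous_loglik X _) hbML
    (fun x hx => (strictConcaveOn_loglik X _ hX).eq_of_isMaxOn hx hbML trivial trivial)
    (by filter_upwards [hc, hw01] with α hcα hwα using le_of_isMaxOn_weighted hcα hbML hwα)
    (tendsto_comp_of_isMaxOn_weighted hw hw01 hc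
      (fun β => isMaxOn_loglik_half_zero X (mem_univ β)) hbML)

end Mdypl

theorem stmt_15 {n p : ℕ} (y : Fin n → ℝ) (hy : ∀ j, y j = 0 ∨ y j = 1)
    (X : Fin n → Fin p → ℝ)
    (hX : Function.Injective fun β : Fin p → ℝ => fun j => ∑ i, X j i * β i)
    (bhat : ℝ → Fin p → ℝ)
    (hbhat : ∀ α ∈ Set.Ioo (0 : ℝ) 1,
      IsMaxOn (loglik (fun j => α * y j + (1 - α) / 2) X) Set.univ (bhat α)) :
    Filter.Tendsto bhat (nhdsWithin 0 (Set.Ioo (0 : ℝ) 1)) (nhds 0) ∧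
    ∀ bML : Fin p → ℝ, IsMaxOn (loglik y X) Set.univ bML →
      Filter.Tendsto bhat (nhdsWithin 1 (Set.Ioo (0 : ℝ) 1)) (nhds bML) :=
  ⟨tendsto_mdypl_nhdsWithin_zero hy hX hbhat,
    fun _ hbML => tendsto_mdypl_nhdsWithin_one hX hbhat hbML⟩
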